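/- Let G and H be finite simple graphs, each of order at least 2, and let k be an integer with 1 ≤ k ≤ C(G + H). Then the following assertions are equivalent: (i) there exist a k-adjacency basis A_G of G and a k-adjacency basis A_H of H such that |(A_G \ N_G(x)) ∪ (A_H \ N_H(y))| ≥ k for every x ∈ V(G) and every y ∈ V(H); (ii) adim_k(G + H) = adim_k(G) + adim_k(H). -/

import Mathlib

open Finset

namespace AdjDim

noncomputable section
open Classical

variable {V W : Type*}

/-- Truncated distance `d_{G,2}(x,y) = min(d_G(x,y), 2)`:
`0` if `x = y`, `1` if `x` and `y` are adjacent, and `2` otherwise. -/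
def d2 (G : SimpleGraph V) (x y : V) : ℕ :=
  if x = y then 0 else if G.Adj x y then 1 else 2

/-- `S` is a `k`-adjacency generator for `G`: every pair of distinct vertices is
distinguished (w.r.t. `d_{G,2}`) by at least `k` vertices of `S`. -/
def IsKAdjGen (G : SimpleGraph V) [Fintype V] (k : ℕ) (S : Finset V) : Prop :=
  ∀ x y : V, x ≠ y → k ≤ (S.filter (fun w => d2 G x w ≠ d2 G y w)).card

/-- The `k`-adjacency dimension of `G`: the minimum cardinality of a
`k`-adjacency generator. -/
def adim (G : SimpleGraph V) [Fintype V] (k : ℕ) : ℕ :=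
  sInf {n | ∃ S : Finset V, IsKAdjGen G k S ∧ S.card = n}

/-- `B` is a `k`-adjacency basis of `G`: a `k`-adjacency generator of minimum
cardinality. -/
def IsKAdjBasis (G : SimpleGraph V) [Fintype V] (k : ℕ) (B : Finset V) : Prop :=
  IsKAdjGen G k B ∧ B.card = adim G k

/-- `G` is `k`-adjacency dimensional: `k` is the largest integer for which a
`k`-adjacency generator exists. -/
def IsKAdjDimensional (G : SimpleGraph V) [Fintype V] (k : ℕ) : Prop :=
  (∃ S : Finset V, IsKAdjGen G k S) ∧
    ∀ k' : ℕ, k < k' → ¬ ∃ S : Finset V, IsKAdjGen G k' S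

/-- `C_G(x,y)`: the set of vertices distinguishing `x` and `y` w.r.t. `d_{G,2}`. -/
def CSet (G : SimpleGraph V) [Fintype V] (x y : V) : Finset V :=
  univ.filter (fun z => d2 G x z ≠ d2 G y z)

/-- `C(G) = min_{x ≠ y} |C_G(x,y)|`. -/
def Cmin (G : SimpleGraph V) [Fintype V] : ℕ :=
  sInf {m | ∃ x y : V, x ≠ y ∧ (CSet G x y).card = m}

/-- `C_k(G)`: the union of the sets `C_G(x,y)` over pairs of distinct vertices
with `|C_G(x,y)| = k`. -/
def Ck (G : SimpleGraph V) [Fintype V] (k : ℕ) : Finset V :=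
  univ.filter (fun z => ∃ x y : V, x ≠ y ∧ (CSet G x y).card = k ∧ z ∈ CSet G x y)

/-- Two distinct vertices `x, y` are twins: every other vertex is at the same
truncated distance from both. -/
def Twins (G : SimpleGraph V) (x y : V) : Prop :=
  x ≠ y ∧ ∀ z : V, z ≠ x → z ≠ y → d2 G x z = d2 G y z

/-- The join `G + H` of two vertex-disjoint graphs. -/
def join (G : SimpleGraph V) (H : SimpleGraph W) : SimpleGraph (V ⊕ W) where
  Adj x y :=
    match x, y with
    | Sum.inl a, Sum.inl b => G.Adj a b
    | Sum.inr a, Sum.inr b => H.Adj a b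
    | Sum.inl _, Sum.inr _ => True
    | Sum.inr _, Sum.inl _ => True
  symm := by
    constructor
    rintro (a | a) (b | b) h
    · exact G.adj_symm h
    · trivial
    · trivial
    · exact H.adj_symm h
  loopless := by
    constructor
    rintro (a | a) h
    · exact G.irrefl h
    · exact H.irrefl h

/-- `K_1 + H`: the join of a one-vertex graph with `H`, i.e. `H` together with a
new universal vertex. -/
def K1join (H : SimpleGraph W) : SimpleGraph (Unit ⊕ W) :=
  join (⊥ : SimpleGraph Unit) H

/- In `G + H` a vertex of `V` is at truncated distance `1` from every vertex of `W`, so it resolves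
no pair inside `W` (and vice versa), while a mixed pair `(x, y)` is resolved exactly by the
non-neighbours of `x` in `V` and of `y` in `W`. Hence the `k`-adjacency generators of `G + H` are
the sets `A ⊔ B` with `A`, `B` generators of `G`, `H` satisfying the mixed condition. In
particular `adim_k G + adim_k H ≤ adim_k (G + H)`, with equality exactly when some bases `A`, `B`
satisfy the mixed condition: a basis of `G + H` then splits into generators whose sizes sum to
`adim_k G + adim_k H`, so they are bases. -/

lemma d2_eq_one_iff {G : SimpleGraph V} {x y : V} : d2 G x y = 1 ↔ G.Adj x y := by
  unfold d2
  split_ifs <;> simp_all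

lemma one_eq_d2_iff {G : SimpleGraph V} {x y : V} : 1 = d2 G x y ↔ G.Adj x y :=
  eq_comm.trans d2_eq_one_iff

section Join

variable {G : SimpleGraph V} {H : SimpleGraph W}

@[simp]
lemma d2_join_inl_inl (x y : V) : d2 (join G H) (.inl x) (.inl y) = d2 G x y := by
  simp only [d2, Sum.inl.injEq]
  rfl

@[simp]
lemma d2_join_inr_inr (x y : W) : d2 (join G H) (.inr x) (.inr y) = d2 H x y := by
  simp only [d2, Sum.inr.injEq]
  rfl

@[simp]
lemma d2_join_inl_inr (x : V) (y : W) : d2 (join G H) (.inl x) (.inr y) = 1 :=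
  if_neg Sum.inl_ne_inr |>.trans (if_pos trivial)

@[simp]
lemma d2_join_inr_inl (x : W) (y : V) : d2 (join G H) (.inr x) (.inl y) = 1 :=
  if_neg Sum.inr_ne_inl |>.trans (if_pos trivial)

lemma _root_.Finset.filter_disjSum {α β : Type*} (s : Finset α) (t : Finset β) (p : α ⊕ β → Prop)
    [DecidablePred p] :
    (s.disjSum t).filter p =
      (s.filter fun a => p (.inl a)).disjSum (t.filter fun b => p (.inr b)) := by
  ext (a | b) <;> simp

lemma _root_.Finset.image_inl_union_image_inr {α β : Type*} (s : Finset α) (t : Finset β) :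
    s.image .inl ∪ t.image .inr = s.disjSum t := by
  ext (a | b) <;> simp

variable (A : Finset V) (B : Finset W)

lemma card_resolving_join_inl_inl (x y : V) :
    #((A.disjSum B).filter fun w => d2 (join G H) (.inl x) w ≠ d2 (join G H) (.inl y) w) =
      #(A.filter fun w => d2 G x w ≠ d2 G y w) := by
  simp [Finset.filter_disjSum]

lemma card_resolving_join_inr_inr (x y : W) :
    #((A.disjSum B).filter fun w => d2 (join G H) (.inr x) w ≠ d2 (join G H) (.inr y) w) =
      #(B.filter fun w => d2 H x w ≠ d2 H y w) := by
  simp [Finset.filter_disjSum]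

lemma card_resolving_join_inl_inr (x : V) (y : W) :
    #((A.disjSum B).filter fun w => d2 (join G H) (.inl x) w ≠ d2 (join G H) (.inr y) w) =
      #(A.filter fun w => ¬ G.Adj x w) + #(B.filter fun w => ¬ H.Adj y w) := by
  simp [Finset.filter_disjSum, d2_eq_one_iff, one_eq_d2_iff]

lemma card_resolving_join_inr_inl (x : W) (y : V) :
    #((A.disjSum B).filter fun w => d2 (join G H) (.inr x) w ≠ d2 (join G H) (.inl y) w) =
      #(A.filter fun w => ¬ G.Adj y w) + #(B.filter fun w => ¬ H.Adj x w) := by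
  simp_rw [ne_comm (a := d2 (join G H) (.inr x) _)]
  exact card_resolving_join_inl_inr A B y x

variable [Fintype V] [Fintype W]

lemma isKAdjGen_join_disjSum_iff (k : ℕ) :
    IsKAdjGen (join G H) k (A.disjSum B) ↔
      IsKAdjGen G k A ∧ IsKAdjGen H k B ∧
        ∀ (x : V) (y : W),
          k ≤ #(A.filter fun w => ¬ G.Adj x w) + #(B.filter fun w => ¬ H.Adj y w) := by
  constructor
  · intro hS
    refine ⟨fun x y hxy => ?_, fun x y hxy => ?_, fun x y => ?_⟩
    · simpa only [card_resolving_join_inl_inl] using hS (.inl x) (.inl y) (by simpa)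
    · simpa only [card_resolving_join_inr_inr] using hS (.inr x) (.inr y) (by simpa)
    · simpa only [card_resolving_join_inl_inr] using hS (.inl x) (.inr y) Sum.inl_ne_inr
  · rintro ⟨hA, hB, hmixed⟩ (x | x) (y | y) hxy
    · simpa only [card_resolving_join_inl_inl] using hA x y (by simpa using hxy)
    · simpa only [card_resolving_join_inl_inr] using hmixed x y
    · simpa only [card_resolving_join_inr_inl] using hmixed y x
    · simpa only [card_resolving_join_inr_inr] using hB x y (by simpa using hxy)

end Join

section Dimension

variable [Fintype V] {G : SimpleGraph V} {k : ℕ}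

lemma adim_le_card {S : Finset V} (hS : IsKAdjGen G k S) : adim G k ≤ #S :=
  Nat.sInf_le ⟨S, hS, rfl⟩

lemma exists_isKAdjBasis {S : Finset V} (hS : IsKAdjGen G k S) : ∃ B, IsKAdjBasis G k B :=
  Nat.sInf_mem (s := {n | ∃ S : Finset V, IsKAdjGen G k S ∧ #S = n}) ⟨#S, S, hS, rfl⟩

lemma isKAdjGen_univ_of_le_Cmin (hk : k ≤ Cmin G) : IsKAdjGen G k univ :=
  fun x y hxy => hk.trans (Nat.sInf_le ⟨x, y, hxy, rfl⟩)

end Dimension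

lemma exists_split_isKAdjBasis_join [Fintype V] [Fintype W] {G : SimpleGraph V}
    {H : SimpleGraph W} {k : ℕ} {S : Finset (V ⊕ W)} (hS : IsKAdjGen (join G H) k S) :
    ∃ (A : Finset V) (B : Finset W), IsKAdjGen G k A ∧ IsKAdjGen H k B ∧
      (∀ (x : V) (y : W),
        k ≤ #(A.filter fun w => ¬ G.Adj x w) + #(B.filter fun w => ¬ H.Adj y w)) ∧
      #A + #B = adim (join G H) k := by
  obtain ⟨T, hT, hTcard⟩ := exists_isKAdjBasis hS
  rw [← T.toLeft_disjSum_toRight] at hT hTcard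
  rw [card_disjSum] at hTcard
  obtain ⟨hA, hB, hmixed⟩ := (isKAdjGen_join_disjSum_iff _ _ k).1 hT
  exact ⟨_, _, hA, hB, hmixed, hTcard⟩

lemma adim_add_le_adim_join [Fintype V] [Fintype W] {G : SimpleGraph V} {H : SimpleGraph W}
    {k : ℕ} {S : Finset (V ⊕ W)} (hS : IsKAdjGen (join G H) k S) :
    adim G k + adim H k ≤ adim (join G H) k := by
  obtain ⟨A, B, hA, hB, -, hcard⟩ := exists_split_isKAdjBasis_join hS
  exact hcard ▸ add_le_add (adim_le_card hA) (adim_le_card hB)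

theorem adim_join_eq_add_iff_general [Fintype V] [Fintype W] (G : SimpleGraph V)
    (H : SimpleGraph W)
    (k : ℕ) (hk2 : k ≤ Cmin (join G H)) :
    (∃ (A : Finset V) (B : Finset W), IsKAdjBasis G k A ∧ IsKAdjBasis H k B ∧
        ∀ (x : V) (y : W),
          k ≤ ((A.filter (fun w => ¬ G.Adj x w)).image Sum.inl ∪
                (B.filter (fun w => ¬ H.Adj y w)).image
                  (Sum.inr : W → V ⊕ W)).card) ↔
      adim (join G H) k = adim G k + adim H k := by
  simp only [Finset.image_inl_union_image_inr, card_disjSum]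
  have hJ := isKAdjGen_univ_of_le_Cmin hk2
  constructor
  · rintro ⟨A, B, ⟨hA, hAcard⟩, ⟨hB, hBcard⟩, hmixed⟩
    refine le_antisymm ?_ (adim_add_le_adim_join hJ)
    calc adim (join G H) k ≤ #(A.disjSum B) :=
          adim_le_card ((isKAdjGen_join_disjSum_iff A B k).2 ⟨hA, hB, hmixed⟩)
      _ = adim G k + adim H k := by rw [card_disjSum, hAcard, hBcard]
  · intro hadd
    obtain ⟨A, B, hA, hB, hmixed, hcard⟩ := exists_split_isKAdjBasis_join hJ
    have := adim_le_card hA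
    have := adim_le_card hB
    exact ⟨A, B, ⟨hA, by omega⟩, ⟨hB, by omega⟩, hmixed⟩

/-- Theorem 4.28: `adim_k(G + H) = adim_k(G) + adim_k(H)` if and only if there
exist `k`-adjacency bases `A` of `G` and `B` of `H` such that
`|(A \\ N_G(x)) ∪ (B \\ N_H(y))| ≥ k` for all `x ∈ V(G)`, `y ∈ V(H)`. -/
theorem adim_join_eq_add_iff [Fintype V] [Fintype W] (G : SimpleGraph V)
    (H : SimpleGraph W) (hG : 2 ≤ Fintype.card V) (hH : 2 ≤ Fintype.card W)
    (k : ℕ) (hk1 : 1 ≤ k) (hk2 : k ≤ Cmin (join G H)) :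
    (∃ (A : Finset V) (B : Finset W), IsKAdjBasis G k A ∧ IsKAdjBasis H k B ∧
        ∀ (x : V) (y : W),
          k ≤ ((A.filter (fun w => ¬ G.Adj x w)).image Sum.inl ∪
                (B.filter (fun w => ¬ H.Adj y w)).image
                  (Sum.inr : W → V ⊕ W)).card) ↔
      adim (join G H) k = adim G k + adim H k :=
  adim_join_eq_add_iff_general G H k hk2

end
end AdjDim
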